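/- For all s in the interval (0, 1], the relative error satisfies 0 < (ρ(s) - exp(-s))/exp(-s) < 0.0015, where ρ(s) = (s² - 6s + 12)/(s² + 6s + 12). -/

import Mathlib

/-! `ρ(s) = N(s) / D(s)` with `N(s) = s² - 6s + 12`, `D(s) = s² + 6s + 12` is the (2,2) Padé
approximant of `e⁻ˢ`, so the relative error is `(N(s) eˢ - D(s)) / D(s)`. The coefficient of `sᵏ`
in the Taylor series of `N(s) eˢ` is `(k - 3)(k - 4) / k!`: it agrees with `D(s)` to order four
and exceeds it by a series in `s⁵` with nonnegative coefficients. A Taylor lower bound for `eˢ`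
gives positivity; a Taylor upper bound bounds the excess by `0.028 s⁵` on `[0, 1]`, where
`19 s⁵ ≤ D(s)`, and `0.028 / 19 < 0.0015`. -/

namespace Real

theorem pade_den_lt_pade_num_mul_exp {s : ℝ} (hs : 0 < s) :
    s ^ 2 + 6 * s + 12 < (s ^ 2 - 6 * s + 12) * exp s := by
  have hN : 0 ≤ s ^ 2 - 6 * s + 12 := by nlinarith [sq_nonneg (s - 3)]
  have hT := sum_le_exp_of_nonneg hs.le 6
  have hexcess : 0 < s ^ 5 / 120 * (s ^ 2 - s + 2) := by
    have : 0 < s ^ 2 - s + 2 := by nlinarith [sq_nonneg (s - 1 / 2)]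
    positivity
  calc s ^ 2 + 6 * s + 12
      < s ^ 2 + 6 * s + 12 + s ^ 5 / 120 * (s ^ 2 - s + 2) := by linarith
    _ = (s ^ 2 - 6 * s + 12) * (1 + s + s ^ 2 / 2 + s ^ 3 / 6 + s ^ 4 / 24 + s ^ 5 / 120) := by
      ring
    _ ≤ (s ^ 2 - 6 * s + 12) * exp s := by
      gcongr
      norm_num [Finset.sum_range_succ, Nat.factorial] at hT
      linarith

theorem pade_num_mul_exp_sub_pade_den_le {s : ℝ} (hs0 : 0 ≤ s) (hs1 : s ≤ 1) :
    (s ^ 2 - 6 * s + 12) * exp s - (s ^ 2 + 6 * s + 12) ≤ 0.028 * s ^ 5 := by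
  have hN : 0 ≤ s ^ 2 - 6 * s + 12 := by nlinarith [sq_nonneg (s - 3)]
  have hT := exp_bound' hs0 hs1 (n := 8) (by norm_num)
  norm_num [Finset.sum_range_succ, Nat.factorial] at hT
  have hs2 : s ^ 2 ≤ 1 := pow_le_one₀ hs0 hs1
  have hs3 : s ^ 3 ≤ 1 := pow_le_one₀ hs0 hs1
  have hs4 : s ^ 4 ≤ 1 := pow_le_one₀ hs0 hs1
  have hs5 : s ^ 5 ≤ 1 := pow_le_one₀ hs0 hs1
  -- the cofactor of `s⁵` has nonnegative coefficients summing to less than `0.028`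
  have hcofactor : 1 / 60 + s / 120 + s ^ 2 / 420 + 43 / 80640 * s ^ 3 + s ^ 4 / 32256
      + s ^ 5 / 35840 ≤ 0.028 := by linarith
  calc (s ^ 2 - 6 * s + 12) * exp s - (s ^ 2 + 6 * s + 12)
      ≤ (s ^ 2 - 6 * s + 12) * (1 + s + s ^ 2 / 2 + s ^ 3 / 6 + s ^ 4 / 24 + s ^ 5 / 120
          + s ^ 6 / 720 + s ^ 7 / 5040 + s ^ 8 * 9 / 322560) - (s ^ 2 + 6 * s + 12) := by
        gcongr
    _ = s ^ 5 * (1 / 60 + s / 120 + s ^ 2 / 420 + 43 / 80640 * s ^ 3 + s ^ 4 / 32256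
          + s ^ 5 / 35840) := by ring
    _ ≤ s ^ 5 * 0.028 := by gcongr
    _ = 0.028 * s ^ 5 := mul_comm _ _

theorem div_sub_exp_neg_div_exp_neg (a : ℝ) {b : ℝ} (hb : b ≠ 0) (s : ℝ) :
    (a / b - exp (-s)) / exp (-s) = (a * exp s - b) / b := by
  rw [exp_neg]
  field_simp

end Real

/-- For `s ∈ (0,1]` the relative error of `ρ(s) = (s²-6s+12)/(s²+6s+12)` over the
exact decay factor `exp(-s)` lies strictly between `0` and `0.0015`. -/
theorem stmt_5 (s : ℝ) (hs : s ∈ Set.Ioc (0 : ℝ) 1) :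
    0 < ((s ^ 2 - 6 * s + 12) / (s ^ 2 + 6 * s + 12) - Real.exp (-s)) / Real.exp (-s) ∧
    ((s ^ 2 - 6 * s + 12) / (s ^ 2 + 6 * s + 12) - Real.exp (-s)) / Real.exp (-s)
      < 0.0015 := by
  obtain ⟨hs0, hs1⟩ := hs
  have hD : 0 < s ^ 2 + 6 * s + 12 := by positivity
  have hDs5 : 19 * s ^ 5 ≤ s ^ 2 + 6 * s + 12 := by
    have : s ^ 5 ≤ s := pow_le_of_le_one hs0.le hs1 (by norm_num)
    nlinarith
  rw [Real.div_sub_exp_neg_div_exp_neg _ hD.ne']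
  constructor
  · exact div_pos (sub_pos.2 (Real.pade_den_lt_pade_num_mul_exp hs0)) hD
  · rw [div_lt_iff₀ hD]
    calc _ ≤ 0.028 * s ^ 5 := Real.pade_num_mul_exp_sub_pade_den_le hs0.le hs1
      _ < 0.0015 * (19 * s ^ 5) := by nlinarith [pow_pos hs0 5]
      _ ≤ 0.0015 * (s ^ 2 + 6 * s + 12) := by gcongr
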